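/- arXiv:2307.08442 — 2 statements merged into one kernel-verified Lean document; each statement's English description precedes it below -/
import Mathlib

section
/- Let G = (V, E, w) be a finite directed graph with integer edge weights and let v ∈ V. There exists an infinite walk u_0 = v, u_1, u_2, … in G with all prefix sums Σ_{j<i} w(u_j, u_{j+1}) ≥ 0 (for every i ≥ 1) if and only if there exists a vertex u ∈ V (possibly u = v) such that there is a nonnegative prefix path from v to u in G and a nonnegative prefix closed walk of length ≥ 1 from u to u in G. -/
/-- `IsWalk E u k`: the sequence `u 0, u 1, …, u k` is a walk in the directed
graph with edge relation `E`. -/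
def IsWalk {V : Type*} (E : V → V → Prop) (u : ℕ → V) (k : ℕ) : Prop :=
  ∀ i < k, E (u i) (u (i + 1))

/-- The total weight of the walk `u 0, …, u k`. -/
def walkWeight {V : Type*} (w : V → V → ℤ) (u : ℕ → V) (k : ℕ) : ℤ :=
  ∑ i ∈ Finset.range k, w (u i) (u (i + 1))

/-- `NonnegPrefix w u k`: every prefix sum of the walk `u 0, …, u k` is nonnegative. -/
def NonnegPrefix {V : Type*} (w : V → V → ℤ) (u : ℕ → V) (k : ℕ) : Prop :=
  ∀ i ≤ k, 0 ≤ walkWeight w u i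

/-- There is a nonnegative prefix path from `s` to `t`. -/
def NNPPath {V : Type*} (E : V → V → Prop) (w : V → V → ℤ) (s t : V) : Prop :=
  ∃ (u : ℕ → V) (k : ℕ), u 0 = s ∧ u k = t ∧ IsWalk E u k ∧ NonnegPrefix w u k

lemma walkWeight_congr {V : Type*} (w : V → V → ℤ) {u u' : ℕ → V} {k : ℕ}
    (h : ∀ i ≤ k, u i = u' i) : walkWeight w u k = walkWeight w u' k := by
  unfold walkWeight
  refine Finset.sum_congr rfl fun i hi => ?_
  have hi' := Finset.mem_range.mp hi
  rw [h i (by omega), h (i+1) (by omega)]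

lemma walkWeight_add {V : Type*} (w : V → V → ℤ) (u : ℕ → V) (a b : ℕ) :
    walkWeight w u (a + b) = walkWeight w u a + walkWeight w (fun m => u (a + m)) b := by
  induction b with
  | zero => simp [walkWeight]
  | succ b ih =>
      show walkWeight w u ((a + b) + 1) = _
      unfold walkWeight at *
      rw [Finset.sum_range_succ, ih, Finset.sum_range_succ]
      simp only [← Nat.add_assoc]
      ring

lemma succ_mod_aux (j l : ℕ) : (j + 1) % l = (j % l + 1) % l := by
  conv_lhs => rw [← Nat.div_add_mod j l, Nat.add_assoc, Nat.mul_add_mod]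

/-- In a finite graph, there is an infinite walk from `v` with all
prefix sums nonnegative iff there is a vertex `u` with a nonnegative prefix path
from `v` to `u` and a nonnegative prefix closed walk of length `≥ 1` from `u` to `u`. -/
theorem infinite_nonneg_walk_iff_nnp_to_nonneg_cycle {V : Type*} [Fintype V]
    (E : V → V → Prop) (w : V → V → ℤ) (v : V) :
    (∃ u : ℕ → V, u 0 = v ∧ (∀ i, E (u i) (u (i + 1))) ∧ ∀ i, 0 ≤ walkWeight w u i) ↔
      ∃ x : V, NNPPath E w v x ∧
        ∃ (c : ℕ → V) (k : ℕ), 1 ≤ k ∧ c 0 = x ∧ c k = x ∧ IsWalk E c k ∧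
          NonnegPrefix w c k := by
  constructor
  · rintro ⟨u, hu0, huE, huN⟩
    -- for each n, there is an index i ≥ n minimizing the prefix sum over [i, ∞)
    have hmin : ∀ n : ℕ, ∃ i, n ≤ i ∧ ∀ m, i ≤ m → walkWeight w u i ≤ walkWeight w u m := by
      intro n
      set g : ℕ → ℕ := fun m => (walkWeight w u (n + m)).toNat with hg
      have hne : (Set.range g).Nonempty := ⟨g 0, 0, rfl⟩
      obtain ⟨k, hk⟩ := Nat.sInf_mem hne
      refine ⟨n + k, Nat.le_add_right n k, fun m hm => ?_⟩
      have h1 : g k ≤ g (m - n) := hk ▸ Nat.sInf_le ⟨m - n, rfl⟩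
      have h2 : n + (m - n) = m := by omega
      rw [← h2]
      have h3 := huN (n + k)
      have h4 := huN (n + (m - n))
      simp only [hg] at h1
      omega
    -- the sequence of successive minimizers
    let F : ℕ → ℕ := fun t => Nat.rec (hmin 0).choose (fun _ ih => (hmin (ih + 1)).choose) t
    have hFs : ∀ t, F (t + 1) = (hmin (F t + 1)).choose := fun t => rfl
    have hF1 : ∀ t, F t < F (t + 1) := by
      intro t
      have := (hmin (F t + 1)).choose_spec.1
      rw [hFs]; omega
    have hF2 : ∀ t m, F t ≤ m → walkWeight w u (F t) ≤ walkWeight w u m := by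
      intro t
      cases t with
      | zero => exact (hmin 0).choose_spec.2
      | succ t => exact (hmin (F t + 1)).choose_spec.2
    have hmono : StrictMono F := strictMono_nat_of_lt_succ hF1
    obtain ⟨a, b, hab, he⟩ := Finite.exists_ne_map_eq_of_infinite (fun t => u (F t))
    have key : ∀ a b : ℕ, a < b → u (F a) = u (F b) →
        ∃ x : V, NNPPath E w v x ∧
          ∃ (c : ℕ → V) (k : ℕ), 1 ≤ k ∧ c 0 = x ∧ c k = x ∧ IsWalk E c k ∧
            NonnegPrefix w c k := by
      intro a b hlt heq
      have hFlt : F a < F b := hmono hlt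
      refine ⟨u (F a), ⟨u, F a, hu0, rfl, fun i _ => huE i, fun i _ => huN i⟩,
        fun m => u (F a + m), F b - F a, by omega, rfl, ?_, ?_, ?_⟩
      · show u (F a + (F b - F a)) = u (F a)
        rw [Nat.add_sub_cancel' (le_of_lt hFlt)]
        exact heq.symm
      · intro i _
        exact huE (F a + i)
      · intro i _
        have h1 := walkWeight_add w u (F a) i
        have h2 := hF2 a (F a + i) (Nat.le_add_right _ _)
        linarith
    exact key (min a b) (max a b) (by omega) (by
      rcases hab.lt_or_gt with h | h
      · rw [min_eq_left h.le, max_eq_right h.le]; exact he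
      · rw [min_eq_right h.le, max_eq_left h.le]; exact he.symm)
  · rintro ⟨x, ⟨p, k, hp0, hpk, hpE, hpN⟩, c, l, hl, hc0, hcl, hcE, hcN⟩
    have hcc : c l = c 0 := by rw [hc0, hcl]
    -- periodic extension of the cycle
    set d : ℕ → V := fun m => c (m % l) with hd
    have hd_succ : ∀ j, d (j + 1) = c (j % l + 1) := by
      intro j
      show c ((j + 1) % l) = c (j % l + 1)
      rw [succ_mod_aux]
      rcases Nat.lt_or_ge (j % l + 1) l with h | h
      · rw [Nat.mod_eq_of_lt h]
      · have : j % l + 1 = l := by have := Nat.mod_lt j (show 0 < l by omega); omega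
        rw [this, Nat.mod_self, hcc]
    have hdE : ∀ j, E (d j) (d (j + 1)) := by
      intro j
      rw [hd_succ]
      exact hcE (j % l) (Nat.mod_lt j (by omega))
    have hd_shift : ∀ q m, d (l * q + m) = d m := by
      intro q m
      show c ((l * q + m) % l) = c (m % l)
      rw [Nat.mul_add_mod]
    -- weight of one pass through the cycle and of partial passes
    have hd_eq_c : ∀ r ≤ l, walkWeight w d r = walkWeight w c r := by
      intro r hr
      unfold walkWeight
      refine Finset.sum_congr rfl fun i hi => ?_
      have hi' := Finset.mem_range.mp hi
      have h1 : d i = c i := by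
        show c (i % l) = c i
        rw [Nat.mod_eq_of_lt (by omega)]
      have h2 : d (i + 1) = c (i + 1) := by
        rcases Nat.lt_or_ge (i + 1) l with h | h
        · show c ((i + 1) % l) = c (i + 1)
          rw [Nat.mod_eq_of_lt h]
        · have hil : i + 1 = l := by omega
          show c ((i + 1) % l) = c (i + 1)
          rw [hil, Nat.mod_self, hcc]
      rw [h1, h2]
    -- weight of q full passes
    have hfull : ∀ q, walkWeight w d (l * q) = q * walkWeight w c l := by
      intro q
      induction q with
      | zero => simp [walkWeight]
      | succ q ih =>
          have : l * (q + 1) = l * q + l := by ring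
          rw [this, walkWeight_add, ih]
          have : walkWeight w (fun m => d (l * q + m)) l = walkWeight w d l :=
            walkWeight_congr w (fun i _ => hd_shift q i)
          rw [this, hd_eq_c l le_rfl]
          push_cast
          ring
    have hdN : ∀ m, 0 ≤ walkWeight w d m := by
      intro m
      have hm : m = l * (m / l) + m % l := (Nat.div_add_mod m l).symm
      rw [hm, walkWeight_add, hfull]
      have h1 : walkWeight w (fun i => d (l * (m / l) + i)) (m % l) = walkWeight w d (m % l) :=
        walkWeight_congr w (fun i _ => hd_shift (m / l) i)
      rw [h1, hd_eq_c (m % l) (Nat.mod_lt m (by omega)).le]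
      have h2 := hcN l le_rfl
      have h3 := hcN (m % l) (Nat.mod_lt m (by omega)).le
      have h4 : (0 : ℤ) ≤ (m / l : ℕ) := Int.natCast_nonneg _
      have h5 := mul_nonneg h4 h2
      linarith
    -- the infinite walk: follow p, then loop on d
    set u' : ℕ → V := fun j => if j < k then p j else d (j - k) with hu'
    have hup : ∀ j ≤ k, u' j = p j := by
      intro j hj
      by_cases h : j < k
      · simp [hu', h]
      · have hjk : j = k := by omega
        subst hjk
        simp only [hu', lt_irrefl, if_false, Nat.sub_self]
        show c (0 % l) = p j
        rw [Nat.zero_mod, hc0, hpk]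
    have hud : ∀ i, u' (k + i) = d i := by
      intro i
      have h : ¬ (k + i < k) := by omega
      simp [hu', h]
    refine ⟨u', by rw [hup 0 (Nat.zero_le _), hp0], ?_, ?_⟩
    · intro i
      rcases Nat.lt_or_ge i k with h | h
      · rw [hup i h.le, hup (i + 1) (by omega)]
        exact hpE i h
      · have h1 : u' i = d (i - k) := by
          conv_lhs => rw [show i = k + (i - k) by omega]
          exact hud _
        have h2 : u' (i + 1) = d (i - k + 1) := by
          rw [show i + 1 = k + (i - k + 1) by omega]; exact hud _
        rw [h1, h2]
        exact hdE (i - k)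
    · intro m
      rcases le_or_gt m k with h | h
      · rw [walkWeight_congr w (fun i hi => hup i (by omega))]
        exact hpN m h
      · rw [show m = k + (m - k) by omega, walkWeight_add]
        have h1 : walkWeight w u' k = walkWeight w p k :=
          walkWeight_congr w (fun i hi => hup i hi)
        have h2 : walkWeight w (fun i => u' (k + i)) (m - k) = walkWeight w d (m - k) :=
          walkWeight_congr w (fun i _ => hud i)
        rw [h1, h2]
        have := hpN k le_rfl
        have := hdN (m - k)
        linarith
end

section
/- Let G = (V, E, w, ⟨V_A, V_B⟩) be a game graph. Define energy functions recursively by e_0(u) = 0 for all u ∈ V, and for j ≥ 1: e_j(u) = max{0, min_{(u,v)∈E} (e_{j−1}(v) − w(u, v))} if u ∈ V_A, and e_j(u) = max{0, max_{(u,v)∈E} (e_{j−1}(v) − w(u, v))} if u ∈ V_B. Then for every i ≥ 0 and every u ∈ V, e_i(u) = e*_i(u), the value of the i-round game at u. -/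
open scoped Classical

/-- A (history-dependent) strategy is a map from nonempty histories to vertices.
A history `x_0 ⋯ x_j` is encoded as the list `[x_j, …, x_0]` (most recent first).
`AliceStrat E VA σ` says: for every history ending (currently) at a vertex
`x ∈ V_A`, the strategy moves along an edge of the graph. -/
def AliceStrat {V : Type*} (E : V → V → Prop) (VA : Set V) (σ : List V → V) : Prop :=
  ∀ (x : V) (h : List V), x ∈ VA → E x (σ (x :: h))

/-- A strategy for Bob: Bob controls the vertices of `V_B = V_Aᶜ`. -/
def BobStrat {V : Type*} (E : V → V → Prop) (VA : Set V) (τ : List V → V) : Prop :=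
  ∀ (x : V) (h : List V), x ∉ VA → E x (τ (x :: h))

/-- Auxiliary: the pair (current vertex, reversed history of previous vertices)
after `k` rounds of play from `u` with strategies `σ` (Alice, on `V_A`) and
`τ` (Bob, on `V_B = V_Aᶜ`). -/
noncomputable def playAux {V : Type*} (VA : Set V) (σ τ : List V → V) (u : V) :
    ℕ → V × List V
  | 0 => (u, [])
  | k + 1 =>
    let p := playAux VA σ τ u k
    (if p.1 ∈ VA then σ (p.1 :: p.2) else τ (p.1 :: p.2), p.1 :: p.2)

/-- `play VA σ τ u k` is the vertex `u_k` of the consistent path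
`u_0 = u, u_1, u_2, …` with respect to the strategies `σ` and `τ`. -/
noncomputable def play {V : Type*} (VA : Set V) (σ τ : List V → V) (u : V) (k : ℕ) : V :=
  (playAux VA σ τ u k).1

/-- `eVal w VA i σ τ u = max {0, - min_{0 ≤ j ≤ i} Σ_{k<j} w(u_k, u_{k+1})}`,
the minimum over all prefixes of the consistent path of length `i` from `u`. -/
noncomputable def eVal {V : Type*} (w : V → V → ℤ) (VA : Set V) (i : ℕ)
    (σ τ : List V → V) (u : V) : ℤ :=
  max 0 (-(Finset.range (i + 1)).inf' ⟨0, Finset.mem_range.mpr (Nat.succ_pos i)⟩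
    (fun j => walkWeight w (play VA σ τ u) j))

/-- The value `e*_i(u)` of the `i`-round game at `u`:
`min_σ max_τ e_{σ,τ}(u)` over all (history-dependent) strategies. -/
noncomputable def eStar {V : Type*} (E : V → V → Prop) (w : V → V → ℤ)
    (VA : Set V) (i : ℕ) (u : V) : ℤ :=
  sInf {x : ℤ | ∃ σ, AliceStrat E VA σ ∧
    x = sSup {y : ℤ | ∃ τ, BobStrat E VA τ ∧ y = eVal w VA i σ τ u}}

/-!
Alice's greedy strategy, which from `x` with `j` rounds left after the move picks a successor
minimising `e j v - w x v`, keeps the energy at most `e i u` against every Bob strategy, and Bob's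
greedy strategy (maximising the same quantity) forces at least `e i u` against every Alice
strategy. Both bounds go by induction on `i`: one round of play turns the `(i + 1)`-round energy
into `max 0 (e' - w u u₁)`, where `e'` is the `i`-round energy from the first move `u₁` under the
strategies restricted to histories starting at `u`. The greedy pair is thus a saddle point with
value `e i u`.
-/

open Finset

theorem Finset.inf'_range_succ' {α : Type*} [SemilatticeInf α] (n : ℕ) (f : ℕ → α) :
    (range (n + 2)).inf' nonempty_range_add_one f =
      f 0 ⊓ (range (n + 1)).inf' nonempty_range_add_one (fun j => f (j + 1)) := by
  rw [inf'_congr _ (range_add_one' _) fun _ _ => rfl, inf'_insert nonempty_range_add_one.map,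
    inf'_map]
  rfl

theorem csInf_csSup_eq_of_saddle {α β γ : Type*} [ConditionallyCompleteLattice γ]
    {S : α → Prop} {T : β → Prop} {f : α → β → γ} {a : α} {b : β} {c : γ}
    (ha : S a) (hb : T b) (hbdd : ∀ σ, S σ → BddAbove (Set.range (f σ)))
    (hle : ∀ τ, T τ → f a τ ≤ c) (hge : ∀ σ, S σ → c ≤ f σ b) :
    sInf {x | ∃ σ, S σ ∧ x = sSup {y | ∃ τ, T τ ∧ y = f σ τ}} = c := by
  have hbdd' : ∀ σ, S σ → BddAbove {y | ∃ τ, T τ ∧ y = f σ τ} := fun σ hσ =>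
    (hbdd σ hσ).mono (by rintro _ ⟨τ, -, rfl⟩; exact ⟨τ, rfl⟩)
  have hsup : ∀ σ, S σ → c ≤ sSup {y | ∃ τ, T τ ∧ y = f σ τ} := fun σ hσ =>
    (hge σ hσ).trans (le_csSup (hbdd' σ hσ) ⟨b, hb, rfl⟩)
  have hsup_a : sSup {y | ∃ τ, T τ ∧ y = f a τ} = c :=
    le_antisymm (csSup_le ⟨_, b, hb, rfl⟩ (by rintro _ ⟨τ, hτ, rfl⟩; exact hle τ hτ))
      (hsup a ha)
  refine IsLeast.csInf_eq ⟨⟨a, ha, hsup_a.symm⟩, ?_⟩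
  rintro _ ⟨σ, hσ, rfl⟩
  exact hsup σ hσ

theorem Set.finite_setOf_exists_and_eq {V β : Type*} [Finite V] (P : V → Prop) (g : V → β) :
    {z | ∃ v, P v ∧ z = g v}.Finite :=
  (Set.finite_range g).subset (by rintro _ ⟨v, -, rfl⟩; exact ⟨v, rfl⟩)

section Game

variable {V : Type*}

def strategyAfter (σ : List V → V) (u : V) : List V → V := fun h => σ (h ++ [u])

theorem playAux_succ' (VA : Set V) (σ τ : List V → V) (u : V) (k : ℕ) :
    playAux VA σ τ u (k + 1) =
      ((playAux VA (strategyAfter σ u) (strategyAfter τ u) (play VA σ τ u 1) k).1,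
        (playAux VA (strategyAfter σ u) (strategyAfter τ u) (play VA σ τ u 1) k).2 ++ [u]) := by
  induction k with
  | zero => rfl
  | succ k ih =>
    rw [playAux, ih]
    rfl

theorem play_succ' (VA : Set V) (σ τ : List V → V) (u : V) (k : ℕ) :
    play VA σ τ u (k + 1) =
      play VA (strategyAfter σ u) (strategyAfter τ u) (play VA σ τ u 1) k := by
  rw [play, playAux_succ']
  rfl

theorem walkWeight_zero (w : V → V → ℤ) (p : ℕ → V) : walkWeight w p 0 = 0 := rfl

theorem walkWeight_succ' (w : V → V → ℤ) (p : ℕ → V) (j : ℕ) :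
    walkWeight w p (j + 1) = w (p 0) (p 1) + walkWeight w (fun k => p (k + 1)) j := by
  rw [walkWeight, sum_range_succ', add_comm]
  rfl

theorem eVal_zero (w : V → V → ℤ) (VA : Set V) (σ τ : List V → V) (u : V) :
    eVal w VA 0 σ τ u = 0 := by
  simp [eVal, walkWeight_zero]

theorem eVal_succ (w : V → V → ℤ) (VA : Set V) (i : ℕ) (σ τ : List V → V) (u : V) :
    eVal w VA (i + 1) σ τ u =
      max 0 (eVal w VA i (strategyAfter σ u) (strategyAfter τ u) (play VA σ τ u 1)
        - w u (play VA σ τ u 1)) := by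
  set v := play VA σ τ u 1
  set p := play VA (strategyAfter σ u) (strategyAfter τ u) v
  set m := (range (i + 1)).inf' nonempty_range_add_one (walkWeight w p)
  have hm : m ≤ 0 := inf'_le _ (mem_range.2 i.succ_pos)
  have key : (range (i + 2)).inf' nonempty_range_add_one (walkWeight w (play VA σ τ u)) =
      min 0 (w u v + m) := by
    have hW : ∀ j, walkWeight w (play VA σ τ u) (j + 1) = w u v + walkWeight w p j := fun j => by
      rw [walkWeight_succ', funext (play_succ' VA σ τ u)]
      rfl
    rw [inf'_range_succ']
    simp only [hW, walkWeight_zero]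
    exact congrArg _ (map_finset_inf' (OrderIso.addLeft (w u v)) _ _).symm
  change max 0 (-(range (i + 2)).inf' nonempty_range_add_one (walkWeight w (play VA σ τ u))) =
    max 0 (max 0 (-m) - w u v)
  rw [key]
  omega

theorem walkWeight_ge (w : V → V → ℤ) {B : ℤ} (hB : ∀ a b, B ≤ w a b) (p : ℕ → V) (j : ℕ) :
    j * B ≤ walkWeight w p j := by
  simpa [walkWeight] using card_nsmul_le_sum (range j) _ B fun k _ => hB (p k) (p (k + 1))

theorem eVal_le (w : V → V → ℤ) {B : ℤ} (hB : ∀ a b, B ≤ w a b) (VA : Set V) (i : ℕ)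
    (σ τ : List V → V) (u : V) : eVal w VA i σ τ u ≤ i * |B| := by
  refine max_le (by positivity) (neg_le.2 (le_inf' _ _ fun j hj => ?_))
  have hji : (j : ℤ) ≤ i := by simp only [mem_range] at hj; omega
  calc -(i * |B|) ≤ -(j * |B|) := by gcongr
    _ ≤ j * B := by nlinarith [neg_abs_le B, j.cast_nonneg (α := ℤ)]
    _ ≤ walkWeight w (play VA σ τ u) j := walkWeight_ge w hB _ j

theorem bddAbove_range_eVal [Finite V] (w : V → V → ℤ) (VA : Set V) (i : ℕ) (σ : List V → V)
    (u : V) : BddAbove (Set.range fun τ => eVal w VA i σ τ u) := by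
  obtain ⟨B, hB⟩ := Finite.bddBelow_range (Function.uncurry w)
  refine ⟨i * |B|, ?_⟩
  rintro _ ⟨τ, rfl⟩
  exact eVal_le w (fun a b => hB (Set.mem_range_self (a, b))) VA i σ τ u

theorem play_one_of_mem {VA : Set V} (σ τ : List V → V) {u : V} (hu : u ∈ VA) :
    play VA σ τ u 1 = σ [u] :=
  if_pos hu

theorem play_one_of_notMem {VA : Set V} (σ τ : List V → V) {u : V} (hu : u ∉ VA) :
    play VA σ τ u 1 = τ [u] :=
  if_neg hu

theorem edge_play_one {E : V → V → Prop} {VA : Set V} {σ τ : List V → V}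
    (hσ : AliceStrat E VA σ) (hτ : BobStrat E VA τ) (u : V) : E u (play VA σ τ u 1) := by
  by_cases hu : u ∈ VA
  · rw [play_one_of_mem σ τ hu]
    exact hσ u [] hu
  · rw [play_one_of_notMem σ τ hu]
    exact hτ u [] hu

theorem AliceStrat.strategyAfter {E : V → V → Prop} {VA : Set V} {σ : List V → V}
    (hσ : AliceStrat E VA σ) (u : V) : AliceStrat E VA (strategyAfter σ u) :=
  fun x h hx => hσ x (h ++ [u]) hx

theorem BobStrat.strategyAfter {E : V → V → Prop} {VA : Set V} {τ : List V → V}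
    (hτ : BobStrat E VA τ) (u : V) : BobStrat E VA (strategyAfter τ u) :=
  fun x h hx => hτ x (h ++ [u]) hx

-- From the history `x :: h`, `i - h.length - 1` rounds remain after the move.
def AliceGreedy (E : V → V → Prop) (w : V → V → ℤ) (VA : Set V) (e : ℕ → V → ℤ) (i : ℕ)
    (σ : List V → V) : Prop :=
  ∀ x h v, x ∈ VA → h.length < i → E x v →
    e (i - h.length - 1) (σ (x :: h)) - w x (σ (x :: h)) ≤ e (i - h.length - 1) v - w x v

def BobGreedy (E : V → V → Prop) (w : V → V → ℤ) (VA : Set V) (e : ℕ → V → ℤ) (i : ℕ)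
    (τ : List V → V) : Prop :=
  ∀ x h v, x ∉ VA → h.length < i → E x v →
    e (i - h.length - 1) v - w x v ≤ e (i - h.length - 1) (τ (x :: h)) - w x (τ (x :: h))

theorem AliceGreedy.strategyAfter {E : V → V → Prop} {w : V → V → ℤ} {VA : Set V}
    {e : ℕ → V → ℤ} {i : ℕ} {σ : List V → V} (hσ : AliceGreedy E w VA e (i + 1) σ) (u : V) :
    AliceGreedy E w VA e i (strategyAfter σ u) := by
  intro x h v hx hh hv
  have hidx : i + 1 - (h ++ [u]).length - 1 = i - h.length - 1 := by simp
  have hmove := hσ x (h ++ [u]) v hx (by simpa using hh) hv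
  rwa [hidx] at hmove

theorem BobGreedy.strategyAfter {E : V → V → Prop} {w : V → V → ℤ} {VA : Set V}
    {e : ℕ → V → ℤ} {i : ℕ} {τ : List V → V} (hτ : BobGreedy E w VA e (i + 1) τ) (u : V) :
    BobGreedy E w VA e i (strategyAfter τ u) := by
  intro x h v hx hh hv
  have hidx : i + 1 - (h ++ [u]).length - 1 = i - h.length - 1 := by simp
  have hmove := hτ x (h ++ [u]) v hx (by simpa using hh) hv
  rwa [hidx] at hmove

theorem exists_aliceGreedy [Finite V] [Nonempty V] (E : V → V → Prop) (w : V → V → ℤ)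
    (VA : Set V) (e : ℕ → V → ℤ) (hout : ∀ v, ∃ x, E v x) (i : ℕ) :
    ∃ σ, AliceStrat E VA σ ∧ AliceGreedy E w VA e i σ := by
  have hmin (x : V) (j : ℕ) : ∃ v, E x v ∧ ∀ v', E x v' → e j v - w x v ≤ e j v' - w x v' :=
    Set.exists_min_image {v | E x v} _ (Set.toFinite _) (hout x)
  choose f hfE hfmin using hmin
  refine ⟨fun | [] => Classical.arbitrary V | x :: h => f x (i - h.length - 1), ?_, ?_⟩
  · exact fun x h _ => hfE _ _
  · exact fun x h v _ _ hv => hfmin _ _ v hv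

theorem exists_bobGreedy [Finite V] [Nonempty V] (E : V → V → Prop) (w : V → V → ℤ)
    (VA : Set V) (e : ℕ → V → ℤ) (hout : ∀ v, ∃ x, E v x) (i : ℕ) :
    ∃ τ, BobStrat E VA τ ∧ BobGreedy E w VA e i τ := by
  have hmax (x : V) (j : ℕ) : ∃ v, E x v ∧ ∀ v', E x v' → e j v' - w x v' ≤ e j v - w x v :=
    Set.exists_max_image {v | E x v} _ (Set.toFinite _) (hout x)
  choose f hfE hfmax using hmax
  refine ⟨fun | [] => Classical.arbitrary V | x :: h => f x (i - h.length - 1), ?_, ?_⟩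
  · exact fun x h _ => hfE _ _
  · exact fun x h v _ _ hv => hfmax _ _ v hv

structure IsValueIteration (E : V → V → Prop) (w : V → V → ℤ) (VA : Set V) (e : ℕ → V → ℤ) :
    Prop where
  zero : ∀ u, e 0 u = 0
  alice : ∀ j u, u ∈ VA → e (j + 1) u = max 0 (sInf {x : ℤ | ∃ v, E u v ∧ x = e j v - w u v})
  bob : ∀ j u, u ∉ VA → e (j + 1) u = max 0 (sSup {x : ℤ | ∃ v, E u v ∧ x = e j v - w u v})

theorem eVal_le_of_aliceGreedy [Finite V] {E : V → V → Prop} {w : V → V → ℤ} {VA : Set V}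
    {e : ℕ → V → ℤ} (he : IsValueIteration E w VA e) (i : ℕ) :
    ∀ (u : V) (σ τ : List V → V), AliceStrat E VA σ → AliceGreedy E w VA e i σ →
      BobStrat E VA τ → eVal w VA i σ τ u ≤ e i u := by
  induction i with
  | zero =>
    intro u σ τ _ _ _
    rw [eVal_zero, he.zero]
  | succ i ih =>
    intro u σ τ hσ hσg hτ
    set v := play VA σ τ u 1
    have hv : E u v := edge_play_one hσ hτ u
    have hnext := ih v _ _ (hσ.strategyAfter u) (hσg.strategyAfter u) (hτ.strategyAfter u)
    have hvalue : max 0 (e i v - w u v) ≤ e (i + 1) u := by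
      by_cases hu : u ∈ VA
      · rw [he.alice i u hu]
        refine max_le_max_left 0 (le_csInf ⟨_, v, hv, rfl⟩ ?_)
        rintro _ ⟨v', hv', rfl⟩
        simpa [v, play_one_of_mem σ τ hu] using hσg u [] v' hu i.succ_pos hv'
      · rw [he.bob i u hu]
        exact max_le_max_left 0 (le_csSup (Set.finite_setOf_exists_and_eq _ _).bddAbove
          ⟨v, hv, rfl⟩)
    rw [eVal_succ]
    exact (max_le_max_left 0 (sub_le_sub_right hnext _)).trans hvalue

theorem le_eVal_of_bobGreedy [Finite V] {E : V → V → Prop} {w : V → V → ℤ} {VA : Set V}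
    {e : ℕ → V → ℤ} (he : IsValueIteration E w VA e) (i : ℕ) :
    ∀ (u : V) (σ τ : List V → V), AliceStrat E VA σ → BobStrat E VA τ →
      BobGreedy E w VA e i τ → e i u ≤ eVal w VA i σ τ u := by
  induction i with
  | zero =>
    intro u σ τ _ _ _
    rw [eVal_zero, he.zero]
  | succ i ih =>
    intro u σ τ hσ hτ hτg
    set v := play VA σ τ u 1
    have hv : E u v := edge_play_one hσ hτ u
    have hnext := ih v _ _ (hσ.strategyAfter u) (hτ.strategyAfter u) (hτg.strategyAfter u)
    have hvalue : e (i + 1) u ≤ max 0 (e i v - w u v) := by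
      by_cases hu : u ∈ VA
      · rw [he.alice i u hu]
        exact max_le_max_left 0 (csInf_le (Set.finite_setOf_exists_and_eq _ _).bddBelow
          ⟨v, hv, rfl⟩)
      · rw [he.bob i u hu]
        refine max_le_max_left 0 (csSup_le ⟨_, v, hv, rfl⟩ ?_)
        rintro _ ⟨v', hv', rfl⟩
        simpa [v, play_one_of_notMem σ τ hu] using hτg u [] v' hu i.succ_pos hv'
    rw [eVal_succ]
    exact hvalue.trans (max_le_max_left 0 (sub_le_sub_right hnext _))

end Game

/-- The value iteration recurrence computes the values of the
finite-duration games: if `e 0 u = 0` for all `u`, and for all `j`: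
`e (j+1) u = max {0, min_{(u,v) ∈ E} (e j v - w u v)}` for `u ∈ V_A`, and
`e (j+1) u = max {0, max_{(u,v) ∈ E} (e j v - w u v)}` for `u ∈ V_B`, then
`e i u = e*_i(u)` for every `i` and every `u`. -/
theorem value_iteration_correct {V : Type*} [Fintype V]
    (E : V → V → Prop) (w : V → V → ℤ) (VA : Set V)
    (hout : ∀ v : V, ∃ x, E v x)
    (e : ℕ → V → ℤ)
    (h0 : ∀ u, e 0 u = 0)
    (hA : ∀ j u, u ∈ VA →
      e (j + 1) u = max 0 (sInf {x : ℤ | ∃ v, E u v ∧ x = e j v - w u v}))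
    (hB : ∀ j u, u ∉ VA →
      e (j + 1) u = max 0 (sSup {x : ℤ | ∃ v, E u v ∧ x = e j v - w u v})) :
    ∀ (i : ℕ) (u : V), e i u = eStar E w VA i u := by
  intro i u
  have : Nonempty V := ⟨u⟩
  have he : IsValueIteration E w VA e := ⟨h0, hA, hB⟩
  obtain ⟨σ₀, hσ₀, hσ₀g⟩ := exists_aliceGreedy E w VA e hout i
  obtain ⟨τ₀, hτ₀, hτ₀g⟩ := exists_bobGreedy E w VA e hout i
  exact (csInf_csSup_eq_of_saddle hσ₀ hτ₀ (fun σ _ => bddAbove_range_eVal w VA i σ u)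
    (fun τ hτ => eVal_le_of_aliceGreedy he i u σ₀ τ hσ₀ hσ₀g hτ)
    (fun σ hσ => le_eVal_of_bobGreedy he i u σ τ₀ hσ hτ₀ hτ₀g)).symm
end
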